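/- Let κ(θ,t) be a smooth negative solution of the curvature flow equation in tangent-angle variables on [−ψ₊,ψ₋]×(0,∞). Define F₁(t) := ∫_{−ψ₊}^{ψ₋} [ −(1/2)κ_θ²(θ,t) + (1/2)κ²(θ,t) + κ(θ,t)·S/L(t) ] dθ + cot ψ₋ · [ (1/2)κ²(ψ₋,t) + κ(ψ₋,t)·S/L(t) ] + cot ψ₊ · [ (1/2)κ²(−ψ₊,t) + κ(−ψ₊,t)·S/L(t) ], F₂(t) := (S²/(2 L(t)²))·(S + cot ψ₋ + cot ψ₊), F(t) := F₁(t) + F₂(t), and F̃(t) := L(t)² · exp( −(2/S) ∫_{−ψ₊}^{ψ₋} log(−κ(θ,t)) dθ ) · F(t). Then F̃ is differentiable on (0,∞) and d/dt F̃(t) = L(t)² · exp( −(2/S) ∫_{−ψ₊}^{ψ₋} log(−κ(θ,t)) dθ ) · ( ∫_{−ψ₊}^{ψ₋} κ_t²/κ² dθ − (1/S)·( ∫_{−ψ₊}^{ψ₋} κ_t/κ dθ )² ). In particular, by the Cauchy–Schwarz inequality, F̃ is non-decreasing in t. -/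

import Mathlib

noncomputable section

open Real Set intervalIntegral

/-- The length `L(t) = −∫_{−ψ₊}^{ψ₋} dθ/κ(θ,t)` associated to a negative curvature
function in the tangent-angle variable. -/
def angLen (ψp ψm : ℝ) (κ : ℝ → ℝ → ℝ) (t : ℝ) : ℝ :=
  - ∫ θ in (-ψp)..ψm, 1 / κ θ t

/-- `κ_θ` (one-sided at the endpoints of `[−ψ₊,ψ₋]`). -/
def angDθ (ψp ψm : ℝ) (κ : ℝ → ℝ → ℝ) (θ t : ℝ) : ℝ :=
  derivWithin (fun θ' => κ θ' t) (Set.Icc (-ψp) ψm) θ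

/-- `κ_{θθ}` -/
def angDθθ (ψp ψm : ℝ) (κ : ℝ → ℝ → ℝ) (θ t : ℝ) : ℝ :=
  derivWithin (fun θ' => angDθ ψp ψm κ θ' t) (Set.Icc (-ψp) ψm) θ

/-- `κ_t` (one-sided at the endpoints of the time interval `J`). -/
def angDt (J : Set ℝ) (κ : ℝ → ℝ → ℝ) (θ t : ℝ) : ℝ :=
  derivWithin (fun τ => κ θ τ) J t

/-- `κ` is a smooth negative solution of the curvature flow equation in
tangent-angle variables on `[−ψ₊,ψ₋] × J`:
`κ_t = κ²(κ_{θθ} + κ + S/L(t))` with the boundary conditions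
`κ_θ(ψ₋,t) = cot ψ₋ (κ(ψ₋,t) + S/L(t))`,
`κ_θ(−ψ₊,t) = −cot ψ₊ (κ(−ψ₊,t) + S/L(t))`, where `S = ψ₊ + ψ₋`. -/
def SolvesAngle (ψp ψm : ℝ) (J : Set ℝ) (κ : ℝ → ℝ → ℝ) : Prop :=
  ContDiffOn ℝ (⊤ : ℕ∞) (fun q : ℝ × ℝ => κ q.1 q.2) (Set.Icc (-ψp) ψm ×ˢ J)
  ∧ (∀ θ ∈ Set.Icc (-ψp) ψm, ∀ t ∈ J, κ θ t < 0)
  ∧ (∀ θ ∈ Set.Ioo (-ψp) ψm, ∀ t ∈ J,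
      angDt J κ θ t
        = (κ θ t)^2 * (angDθθ ψp ψm κ θ t + κ θ t + (ψp + ψm) / angLen ψp ψm κ t))
  ∧ (∀ t ∈ J,
      angDθ ψp ψm κ ψm t = Real.cot ψm * (κ ψm t + (ψp + ψm) / angLen ψp ψm κ t)
      ∧ angDθ ψp ψm κ (-ψp) t
          = - Real.cot ψp * (κ (-ψp) t + (ψp + ψm) / angLen ψp ψm κ t))

/-- The functional `F₁(t)`. -/
def lyapF1 (ψp ψm : ℝ) (κ : ℝ → ℝ → ℝ) (t : ℝ) : ℝ :=
  (∫ θ in (-ψp)..ψm,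
    (-(1/2)) * (angDθ ψp ψm κ θ t)^2 + (1/2) * (κ θ t)^2
      + κ θ t * ((ψp + ψm) / angLen ψp ψm κ t))
  + Real.cot ψm * ((1/2) * (κ ψm t)^2 + κ ψm t * ((ψp + ψm) / angLen ψp ψm κ t))
  + Real.cot ψp * ((1/2) * (κ (-ψp) t)^2 + κ (-ψp) t * ((ψp + ψm) / angLen ψp ψm κ t))

/-- The functional `F₂(t)`. -/
def lyapF2 (ψp ψm : ℝ) (κ : ℝ → ℝ → ℝ) (t : ℝ) : ℝ :=
  (ψp + ψm)^2 / (2 * (angLen ψp ψm κ t)^2)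
    * ((ψp + ψm) + Real.cot ψm + Real.cot ψp)

/-- The renormalized functional `F̃(t)`. -/
def lyapTilde (ψp ψm : ℝ) (κ : ℝ → ℝ → ℝ) (t : ℝ) : ℝ :=
  (angLen ψp ψm κ t)^2
    * Real.exp (-(2 / (ψp + ψm)) * ∫ θ in (-ψp)..ψm, Real.log (-(κ θ t)))
    * (lyapF1 ψp ψm κ t + lyapF2 ψp ψm κ t)


section AuxLyap
open MeasureTheory
-- generic FTC helper
lemma myftc {a b : ℝ} (hab : a ≤ b) {g g' : ℝ → ℝ}
    (hg : ∀ θ ∈ Set.Icc a b, HasDerivWithinAt g (g' θ) (Set.Icc a b) θ)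
    (hg' : ContinuousOn g' (Set.Icc a b)) :
    ∫ θ in a..b, g' θ = g b - g a := by
  apply intervalIntegral.integral_eq_sub_of_hasDeriv_right_of_le hab
  · exact fun x hx => (hg x hx).continuousWithinAt
  · intro x hx
    exact ((hg x ⟨hx.1.le, hx.2.le⟩).hasDerivAt (Icc_mem_nhds hx.1 hx.2)).hasDerivWithinAt
  · exact hg'.intervalIntegrable_of_Icc hab

-- generic parametric derivative
lemma myparam {a b t₀ δ : ℝ} (hab : a ≤ b) (hδ : 0 < δ) {g g' : ℝ → ℝ → ℝ}
    (hg : ContinuousOn (fun q : ℝ × ℝ => g q.1 q.2) (Set.Icc a b ×ˢ Set.Icc (t₀-δ) (t₀+δ)))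
    (hg' : ContinuousOn (fun q : ℝ × ℝ => g' q.1 q.2) (Set.Icc a b ×ˢ Set.Icc (t₀-δ) (t₀+δ)))
    (hd : ∀ θ ∈ Set.Icc a b, ∀ t ∈ Set.Ioo (t₀-δ) (t₀+δ), HasDerivAt (fun τ => g θ τ) (g' θ t) t) :
    HasDerivAt (fun t => ∫ θ in a..b, g θ t) (∫ θ in a..b, g' θ t₀) t₀ := by
  have ht₀ : t₀ ∈ Set.Icc (t₀-δ) (t₀+δ) := by constructor <;> linarith
  obtain ⟨C, hC⟩ := (isCompact_Icc.prod isCompact_Icc).exists_bound_of_continuousOn hg'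
  have huIcc : Set.uIcc a b = Set.Icc a b := Set.uIcc_of_le hab
  have huIoc : Set.uIoc a b ⊆ Set.Icc a b := Set.uIoc_of_le hab ▸ Set.Ioc_subset_Icc_self
  have slicecont : ∀ t ∈ Set.Icc (t₀-δ) (t₀+δ), ContinuousOn (fun θ => g θ t) (Set.Icc a b) := by
    intro t ht
    exact hg.comp (by fun_prop) (fun θ hθ => Set.mk_mem_prod hθ ht)
  have slicecont' : ∀ t ∈ Set.Icc (t₀-δ) (t₀+δ), ContinuousOn (fun θ => g' θ t) (Set.Icc a b) := by
    intro t ht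
    exact hg'.comp (by fun_prop) (fun θ hθ => Set.mk_mem_prod hθ ht)
  refine (intervalIntegral.hasDerivAt_integral_of_dominated_loc_of_deriv_le
    (F := fun t θ => g θ t) (F' := fun t θ => g' θ t) (bound := fun _ => |C|) (Metric.ball_mem_nhds t₀ hδ) ?_ ?_ ?_ ?_ ?_ ?_).2
  · filter_upwards [Icc_mem_nhds (by linarith : t₀ - δ < t₀) (by linarith : t₀ < t₀+δ)] with t ht
    exact ((slicecont t ht).mono huIoc).aestronglyMeasurable measurableSet_uIoc
  · exact ((slicecont t₀ ht₀).intervalIntegrable_of_Icc hab)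
  · exact ((slicecont' t₀ ht₀).mono huIoc).aestronglyMeasurable measurableSet_uIoc
  · refine Filter.Eventually.of_forall (fun θ hθ x hx => ?_)
    have hxI : x ∈ Set.Icc (t₀-δ) (t₀+δ) := by
      have := abs_lt.1 (mem_ball_iff_norm.1 hx); constructor <;> [linarith [this.1]; linarith [this.2]]
    calc ‖g' θ x‖ ≤ C := hC ⟨θ, x⟩ (Set.mk_mem_prod (huIoc hθ) hxI)
    _ ≤ |C| := le_abs_self C
  · exact intervalIntegrable_const
  · refine Filter.Eventually.of_forall (fun θ hθ x hx => ?_)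
    have hxI : x ∈ Set.Ioo (t₀-δ) (t₀+δ) := by
      have := abs_lt.1 (mem_ball_iff_norm.1 hx); constructor <;> [linarith [this.1]; linarith [this.2]]
    exact hd θ (huIoc hθ) x hxI

section pack
set_option linter.unusedSectionVars false
variable (a' b' : ℝ) (f : ℝ × ℝ → ℝ)

def Dom : Set (ℝ × ℝ) := Set.Icc a' b' ×ˢ Set.Ioi 0

end pack

section slices
variable {f : ℝ × ℝ → ℝ}

lemma sliceθ {a' b' : ℝ} {M : ℝ × ℝ →L[ℝ] ℝ} {q : ℝ × ℝ}
    (h : HasFDerivWithinAt f M (Dom a' b') q) (hq2 : q.2 ∈ Set.Ioi (0:ℝ)) :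
    HasDerivWithinAt (fun θ => f (θ, q.2)) (M (1, 0)) (Set.Icc a' b') q.1 := by
  have hι : HasDerivWithinAt (fun θ : ℝ => (θ, q.2)) ((1:ℝ), (0:ℝ)) (Set.Icc a' b') q.1 :=
    ((hasDerivAt_id q.1).prodMk (hasDerivAt_const q.1 q.2)).hasDerivWithinAt
  have := h.comp_hasDerivWithinAt q.1 hι (fun θ hθ => Set.mk_mem_prod hθ hq2)
  exact this

lemma slicet {a' b' : ℝ} {M : ℝ × ℝ →L[ℝ] ℝ} {q : ℝ × ℝ}
    (h : HasFDerivWithinAt f M (Dom a' b') q)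
    (hq1 : q.1 ∈ Set.Icc a' b') (hq2 : q.2 ∈ Set.Ioi (0:ℝ)) :
    HasDerivAt (fun t => f (q.1, t)) (M (0, 1)) q.2 := by
  have hι : HasDerivWithinAt (fun t : ℝ => (q.1, t)) ((0:ℝ), (1:ℝ)) (Set.Ioi (0:ℝ)) q.2 :=
    ((hasDerivAt_const q.2 q.1).prodMk (hasDerivAt_id q.2)).hasDerivWithinAt
  have := h.comp_hasDerivWithinAt q.2 hι (fun t ht => Set.mk_mem_prod hq1 ht)
  have h2 := this.hasDerivAt (Ioi_mem_nhds hq2)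
  exact h2

end slices

section pack
set_option linter.unusedSectionVars false
variable (a' b' : ℝ) (f : ℝ × ℝ → ℝ)

def FF : ℝ × ℝ → (ℝ × ℝ →L[ℝ] ℝ) := fderivWithin ℝ f (Dom a' b')
def GG : ℝ × ℝ → (ℝ × ℝ →L[ℝ] (ℝ × ℝ →L[ℝ] ℝ)) := fderivWithin ℝ (FF a' b' f) (Dom a' b')

def K1 : ℝ × ℝ → ℝ := fun q => FF a' b' f q (1, 0)
def Kt : ℝ × ℝ → ℝ := fun q => FF a' b' f q (0, 1)
def K11 : ℝ × ℝ → ℝ := fun q => GG a' b' f q (1, 0) (1, 0)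
def K1t : ℝ × ℝ → ℝ := fun q => GG a' b' f q (0, 1) (1, 0)

variable {a' b' f}
variable (hab : a' < b') (hf : ContDiffOn ℝ (⊤ : ℕ∞) f (Dom a' b'))

include hab in
lemma hDom : UniqueDiffOn ℝ (Dom a' b') :=
  (uniqueDiffOn_Icc hab).prod (isOpen_Ioi.uniqueDiffOn)

include hab hf

lemma hFF2 : ContDiffOn ℝ 2 (FF a' b' f) (Dom a' b') :=
  hf.fderivWithin (hDom hab) (WithTop.coe_le_coe.2 le_top)

lemma contF : ContinuousOn (FF a' b' f) (Dom a' b') := (hFF2 hab hf).continuousOn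

lemma contK1 : ContinuousOn (K1 a' b' f) (Dom a' b') :=
  (contF hab hf).clm_apply continuousOn_const

lemma contKt : ContinuousOn (Kt a' b' f) (Dom a' b') :=
  (contF hab hf).clm_apply continuousOn_const

lemma contG : ContinuousOn (GG a' b' f) (Dom a' b') :=
  (((hFF2 hab hf).fderivWithin (hDom hab) (show (1:WithTop ℕ∞)+1 ≤ 2 by norm_num)) :
    ContDiffOn ℝ 1 _ _).continuousOn

lemma contK11 : ContinuousOn (K11 a' b' f) (Dom a' b') :=
  ((contG hab hf).clm_apply continuousOn_const).clm_apply continuousOn_const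

lemma contK1t : ContinuousOn (K1t a' b' f) (Dom a' b') :=
  ((contG hab hf).clm_apply continuousOn_const).clm_apply continuousOn_const

lemma hFd : ∀ q ∈ Dom a' b', HasFDerivWithinAt f (FF a' b' f q) (Dom a' b') q := fun q hq =>
  ((hf.differentiableOn (by simp)) q hq).hasFDerivWithinAt

lemma hGd : ∀ q ∈ Dom a' b', HasFDerivWithinAt (FF a' b' f) (GG a' b' f q) (Dom a' b') q :=
  fun q hq => (((hFF2 hab hf).differentiableOn two_ne_zero) q hq).hasFDerivWithinAt

lemma symmG : ∀ q ∈ Dom a' b', ∀ v w, GG a' b' f q v w = GG a' b' f q w v := by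
  intro q hq v w
  have h := (hf q hq).isSymmSndFDerivWithinAt (by rw [minSmoothness_of_isRCLikeNormedField]; exact WithTop.coe_le_coe.2 le_top) (hDom hab) ?_ hq
  · exact h v w
  · have h1 : interior (Dom a' b') = Set.Ioo a' b' ×ˢ Set.Ioi 0 := by
      rw [Dom, interior_prod_eq, interior_Icc, interior_Ioi]
    rw [h1, closure_prod_eq, closure_Ioo hab.ne, closure_Ioi]
    exact ⟨⟨hq.1.1, hq.1.2⟩, Set.mem_Ici.2 (le_of_lt hq.2)⟩
end pack

section pack2
set_option linter.unusedSectionVars false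
variable {a' b' : ℝ} {f : ℝ × ℝ → ℝ}
variable (hab : a' < b') (hf : ContDiffOn ℝ (⊤ : ℕ∞) f (Dom a' b'))
include hab hf

lemma hK1slice {q : ℝ × ℝ} (hq : q ∈ Dom a' b') :
    HasDerivWithinAt (fun θ => f (θ, q.2)) (K1 a' b' f q) (Set.Icc a' b') q.1 :=
  sliceθ (hFd hab hf q hq) hq.2

lemma hKtslice {q : ℝ × ℝ} (hq : q ∈ Dom a' b') :
    HasDerivAt (fun t => f (q.1, t)) (Kt a' b' f q) q.2 :=
  slicet (hFd hab hf q hq) hq.1 hq.2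

lemma eq_angDθ {q : ℝ × ℝ} (hq : q ∈ Dom a' b') :
    derivWithin (fun θ => f (θ, q.2)) (Set.Icc a' b') q.1 = K1 a' b' f q :=
  (hK1slice hab hf hq).derivWithin (uniqueDiffOn_Icc hab q.1 hq.1)

lemma eq_angDt {q : ℝ × ℝ} (hq : q ∈ Dom a' b') :
    derivWithin (fun t => f (q.1, t)) (Set.Ioi 0) q.2 = Kt a' b' f q :=
  ((hKtslice hab hf hq).hasDerivWithinAt).derivWithin (isOpen_Ioi.uniqueDiffWithinAt hq.2)

lemma hK1_fderiv {q : ℝ × ℝ} (hq : q ∈ Dom a' b') :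
    HasFDerivWithinAt (K1 a' b' f)
      ((ContinuousLinearMap.apply ℝ ℝ ((1:ℝ),(0:ℝ))).comp (GG a' b' f q)) (Dom a' b') q :=
  (ContinuousLinearMap.apply ℝ ℝ ((1:ℝ),(0:ℝ))).hasFDerivAt.comp_hasFDerivWithinAt q
    (hGd hab hf q hq)

lemma hKt_fderiv {q : ℝ × ℝ} (hq : q ∈ Dom a' b') :
    HasFDerivWithinAt (Kt a' b' f)
      ((ContinuousLinearMap.apply ℝ ℝ ((0:ℝ),(1:ℝ))).comp (GG a' b' f q)) (Dom a' b') q :=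
  (ContinuousLinearMap.apply ℝ ℝ ((0:ℝ),(1:ℝ))).hasFDerivAt.comp_hasFDerivWithinAt q
    (hGd hab hf q hq)

lemma hK1θ {q : ℝ × ℝ} (hq : q ∈ Dom a' b') :
    HasDerivWithinAt (fun θ => K1 a' b' f (θ, q.2)) (K11 a' b' f q) (Set.Icc a' b') q.1 := by
  have := sliceθ (hK1_fderiv hab hf hq) hq.2
  simpa [K11] using this

lemma hK1t {q : ℝ × ℝ} (hq : q ∈ Dom a' b') :
    HasDerivAt (fun t => K1 a' b' f (q.1, t)) (K1t a' b' f q) q.2 := by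
  have := slicet (hK1_fderiv hab hf hq) hq.1 hq.2
  simpa [K1t] using this

lemma hKtθ {q : ℝ × ℝ} (hq : q ∈ Dom a' b') :
    HasDerivWithinAt (fun θ => Kt a' b' f (θ, q.2)) (K1t a' b' f q) (Set.Icc a' b') q.1 := by
  have h := sliceθ (hKt_fderiv hab hf hq) hq.2
  have hs : GG a' b' f q ((1:ℝ),(0:ℝ)) ((0:ℝ),(1:ℝ)) = GG a' b' f q ((0:ℝ),(1:ℝ)) ((1:ℝ),(0:ℝ)) :=
    symmG hab hf q hq _ _
  simpa [K1t, ← hs] using h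

lemma eq_angDθθ {q : ℝ × ℝ} (hq : q ∈ Dom a' b') :
    derivWithin (fun θ => derivWithin (fun θ' => f (θ', q.2)) (Set.Icc a' b') θ)
      (Set.Icc a' b') q.1 = K11 a' b' f q := by
  rw [derivWithin_congr (f := fun θ => K1 a' b' f (θ, q.2))
    (fun θ hθ => eq_angDθ hab hf (Set.mk_mem_prod hθ hq.2)) (eq_angDθ hab hf hq)]
  exact (hK1θ hab hf hq).derivWithin (uniqueDiffOn_Icc hab q.1 hq.1)

end pack2

end AuxLyap

set_option maxHeartbeats 1000000 in
/-- **The Lyapunov functional**: for any smooth negative solution of the curvature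
flow equation in tangent-angle variables on `(0,∞)`,
`d/dt F̃(t) = L(t)² exp(−(2/S)∫log(−κ)) (∫κ_t²/κ² − (1/S)(∫κ_t/κ)²) ≥ 0`,
so `F̃` is non-decreasing. -/
theorem lyapunov_functional
    (ψp ψm : ℝ) (hψp : ψp ∈ Set.Ioo 0 π) (hψm : ψm ∈ Set.Ioo 0 π)
    (κ : ℝ → ℝ → ℝ) (hκ : SolvesAngle ψp ψm (Set.Ioi 0) κ) :
    (∀ t ∈ Set.Ioi (0:ℝ),
      HasDerivAt (lyapTilde ψp ψm κ)
        ((angLen ψp ψm κ t)^2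
          * Real.exp (-(2 / (ψp + ψm)) * ∫ θ in (-ψp)..ψm, Real.log (-(κ θ t)))
          * ((∫ θ in (-ψp)..ψm, (angDt (Set.Ioi 0) κ θ t)^2 / (κ θ t)^2)
            - (1 / (ψp + ψm))
              * (∫ θ in (-ψp)..ψm, angDt (Set.Ioi 0) κ θ t / κ θ t)^2)) t)
    ∧ (∀ t₁ ∈ Set.Ioi (0:ℝ), ∀ t₂ ∈ Set.Ioi (0:ℝ), t₁ ≤ t₂ →
        lyapTilde ψp ψm κ t₁ ≤ lyapTilde ψp ψm κ t₂) := by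
  obtain ⟨hsm, hneg, hpde, hbc⟩ := hκ
  have hψp0 := hψp.1
  have hψm0 := hψm.1
  have hab : (-ψp) < ψm := by linarith
  have hab' : (-ψp) ≤ ψm := hab.le
  have hSpos : (0:ℝ) < ψp + ψm := by linarith
  have hSne : ψp + ψm ≠ 0 := ne_of_gt hSpos
  have hf : ContDiffOn ℝ (⊤ : ℕ∞) (fun q : ℝ × ℝ => κ q.1 q.2) (Dom (-ψp) ψm) := hsm
  set f : ℝ × ℝ → ℝ := fun q : ℝ × ℝ => κ q.1 q.2 with hfdef
  set k1 := K1 (-ψp) ψm f with hk1def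
  set kt := Kt (-ψp) ψm f with hktdef
  set k11 := K11 (-ψp) ψm f with hk11def
  set k1t := K1t (-ψp) ψm f with hk1tdef
  have hfc : ContinuousOn f (Dom (-ψp) ψm) := hf.continuousOn
  have hck1 : ContinuousOn k1 (Dom (-ψp) ψm) := contK1 hab hf
  have hckt : ContinuousOn kt (Dom (-ψp) ψm) := contKt hab hf
  have hck11 : ContinuousOn k11 (Dom (-ψp) ψm) := contK11 hab hf
  have hck1t : ContinuousOn k1t (Dom (-ψp) ψm) := contK1t hab hf
  have hκ0 : ∀ q ∈ Dom (-ψp) ψm, f q ≠ 0 := fun q hq => ne_of_lt (hneg q.1 hq.1 q.2 hq.2)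
  -- slice continuity and integrability
  have sliceC : ∀ (X : ℝ × ℝ → ℝ), ContinuousOn X (Dom (-ψp) ψm) → ∀ t ∈ Set.Ioi (0:ℝ),
      ContinuousOn (fun θ => X (θ, t)) (Set.Icc (-ψp) ψm) := by
    intro X hX t ht
    exact hX.comp ((continuous_id.prodMk continuous_const).continuousOn)
      (fun θ hθ => Set.mk_mem_prod hθ ht)
  have II : ∀ (X : ℝ × ℝ → ℝ), ContinuousOn X (Dom (-ψp) ψm) → ∀ t ∈ Set.Ioi (0:ℝ),
      IntervalIntegrable (fun θ => X (θ, t)) MeasureTheory.volume (-ψp) ψm :=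
    fun X hX t ht => (sliceC X hX t ht).intervalIntegrable_of_Icc hab'
  -- a.e.-congruence of interval integrals from equality on the open interval
  have intCongr : ∀ (g h : ℝ → ℝ), (∀ θ ∈ Set.Ioo (-ψp) ψm, g θ = h θ) →
      (∫ θ in (-ψp)..ψm, g θ) = ∫ θ in (-ψp)..ψm, h θ := by
    intro g h hgh
    apply intervalIntegral.integral_congr_ae
    have hb : ∀ᵐ (x : ℝ), x ≠ ψm := by
      simpa [MeasureTheory.ae_iff, Set.setOf_eq_eq_singleton] using Real.volume_singleton
    filter_upwards [hb] with x hx hxI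
    rw [Set.uIoc_of_le hab'] at hxI
    exact hgh x ⟨hxI.1, lt_of_le_of_ne hxI.2 hx⟩
  -- translated PDE
  have hPDE : ∀ θ ∈ Set.Ioo (-ψp) ψm, ∀ t ∈ Set.Ioi (0:ℝ),
      kt (θ, t) = (κ θ t)^2 * (k11 (θ, t) + κ θ t + (ψp + ψm) / angLen ψp ψm κ t) := by
    intro θ hθ t ht
    have hq : (θ, t) ∈ Dom (-ψp) ψm := ⟨⟨hθ.1.le, hθ.2.le⟩, ht⟩
    have h1 := hpde θ hθ t ht
    have e1 : angDt (Set.Ioi 0) κ θ t = kt (θ, t) := eq_angDt hab hf hq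
    have e2 : angDθθ ψp ψm κ θ t = k11 (θ, t) := eq_angDθθ hab hf hq
    rw [e1, e2] at h1
    exact h1
  -- translated boundary conditions
  have hbcb : ∀ t ∈ Set.Ioi (0:ℝ),
      k1 (ψm, t) = Real.cot ψm * (κ ψm t + (ψp + ψm) / angLen ψp ψm κ t) := by
    intro t ht
    have hq : ((ψm : ℝ), t) ∈ Dom (-ψp) ψm := ⟨⟨hab', le_rfl⟩, ht⟩
    have := (hbc t ht).1
    rwa [show angDθ ψp ψm κ ψm t = k1 (ψm, t) from eq_angDθ hab hf hq] at this
  have hbca : ∀ t ∈ Set.Ioi (0:ℝ),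
      k1 (-ψp, t) = - Real.cot ψp * (κ (-ψp) t + (ψp + ψm) / angLen ψp ψm κ t) := by
    intro t ht
    have hq : ((-ψp : ℝ), t) ∈ Dom (-ψp) ψm := ⟨⟨le_rfl, hab'⟩, ht⟩
    have := (hbc t ht).2
    rwa [show angDθ ψp ψm κ (-ψp) t = k1 (-ψp, t) from eq_angDθ hab hf hq] at this
  -- parametric differentiation helper
  have hsub : ∀ t₀ ∈ Set.Ioi (0:ℝ),
      (Set.Icc (-ψp) ψm ×ˢ Set.Icc (t₀ - t₀/2) (t₀ + t₀/2)) ⊆ Dom (-ψp) ψm := by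
    intro t₀ ht₀ q hq
    have ht₀' : (0:ℝ) < t₀ := ht₀
    exact ⟨hq.1, lt_of_lt_of_le (by linarith) hq.2.1⟩
  have paramD : ∀ (g g' : ℝ × ℝ → ℝ), ContinuousOn g (Dom (-ψp) ψm) →
      ContinuousOn g' (Dom (-ψp) ψm) →
      (∀ q ∈ Dom (-ψp) ψm, HasDerivAt (fun τ => g (q.1, τ)) (g' q) q.2) →
      ∀ t₀ ∈ Set.Ioi (0:ℝ),
      HasDerivAt (fun t => ∫ θ in (-ψp)..ψm, g (θ, t)) (∫ θ in (-ψp)..ψm, g' (θ, t₀)) t₀ := by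
    intro g g' hcg hcg' hd t₀ ht₀
    have ht₀' : (0:ℝ) < t₀ := ht₀
    have hδ : 0 < t₀/2 := by linarith
    refine myparam (g := fun θ t => g (θ, t)) (g' := fun θ t => g' (θ, t)) hab' hδ ?_ ?_ ?_
    · exact hcg.mono (hsub t₀ ht₀)
    · exact hcg'.mono (hsub t₀ ht₀)
    · intro θ hθ t ht
      exact hd (θ, t) ⟨hθ, by simp only [Set.mem_Ioi]; linarith [ht.1]⟩
  -- time derivative of angLen
  have hL' : ∀ t₀ ∈ Set.Ioi (0:ℝ), HasDerivAt (angLen ψp ψm κ)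
      (∫ θ in (-ψp)..ψm, kt (θ, t₀) / (κ θ t₀)^2) t₀ := by
    intro t₀ ht₀
    have h := paramD (fun q => 1 / f q) (fun q => -(kt q / f q ^ 2))
      (continuousOn_const.div hfc hκ0)
      ((hckt.div (hfc.pow 2) (fun q hq => pow_ne_zero 2 (hκ0 q hq))).neg)
      (fun q hq => by
        have h1 := ((hasDerivAt_const q.2 (1:ℝ)).div (hKtslice hab hf hq) (hκ0 q hq))
        refine h1.congr_deriv ?_
        simp only [zero_mul, zero_sub, one_mul, neg_div]
        rfl) t₀ ht₀
    have h2 := h.neg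
    rw [intervalIntegral.integral_neg, neg_neg] at h2
    exact h2
  -- time derivative of the log integral
  have hB' : ∀ t₀ ∈ Set.Ioi (0:ℝ),
      HasDerivAt (fun t => ∫ θ in (-ψp)..ψm, Real.log (-(κ θ t)))
      (∫ θ in (-ψp)..ψm, kt (θ, t₀) / κ θ t₀) t₀ := by
    intro t₀ ht₀
    exact paramD (fun q => Real.log (-(f q))) (fun q => kt q / f q)
      ((hfc.neg).log (fun q hq => neg_ne_zero.2 (hκ0 q hq)))
      (hckt.div hfc hκ0)
      (fun q hq => by
        have h1 := ((hKtslice hab hf hq).neg).log (neg_ne_zero.2 (hκ0 q hq))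
        convert h1 using 1
        · rfl
        simp only [Pi.neg_apply]
        rw [neg_div_neg_eq]) t₀ ht₀
  -- time derivative of Cc := ∫ -(1/2) k1² + (1/2) κ²
  have hC' : ∀ t₀ ∈ Set.Ioi (0:ℝ),
      HasDerivAt (fun t => ∫ θ in (-ψp)..ψm, (-(1/2)) * k1 (θ, t)^2 + (1/2) * (κ θ t)^2)
      (∫ θ in (-ψp)..ψm, (-(k1 (θ, t₀) * k1t (θ, t₀)) + κ θ t₀ * kt (θ, t₀))) t₀ := by
    intro t₀ ht₀
    exact paramD (fun q => (-(1/2)) * k1 q^2 + (1/2) * f q^2)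
      (fun q => -(k1 q * k1t q) + f q * kt q)
      ((continuousOn_const.mul (hck1.pow 2)).add (continuousOn_const.mul (hfc.pow 2)))
      (((hck1.mul hck1t).neg).add (hfc.mul hckt))
      (fun q hq => by
        have h1 := (((hK1t hab hf hq).pow 2).const_mul (-(1/2) : ℝ)).add
          (((hKtslice hab hf hq).pow 2).const_mul ((1/2) : ℝ))
        refine h1.congr_deriv ?_
        push_cast
        ring) t₀ ht₀
  -- time derivative of Dd := ∫ κ
  have hD' : ∀ t₀ ∈ Set.Ioi (0:ℝ),
      HasDerivAt (fun t => ∫ θ in (-ψp)..ψm, κ θ t) (∫ θ in (-ψp)..ψm, kt (θ, t₀)) t₀ :=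
    fun t₀ ht₀ => paramD f kt hfc hckt (fun q hq => hKtslice hab hf hq) t₀ ht₀
  -- boundary time derivatives
  have hp' : ∀ t₀ ∈ Set.Ioi (0:ℝ), HasDerivAt (fun t => κ ψm t) (kt (ψm, t₀)) t₀ :=
    fun t₀ ht₀ => hKtslice hab hf (⟨⟨hab', le_rfl⟩, ht₀⟩ : ((ψm:ℝ), t₀) ∈ Dom (-ψp) ψm)
  have hq' : ∀ t₀ ∈ Set.Ioi (0:ℝ), HasDerivAt (fun t => κ (-ψp) t) (kt (-ψp, t₀)) t₀ :=
    fun t₀ ht₀ => hKtslice hab hf (⟨⟨le_rfl, hab'⟩, ht₀⟩ : ((-ψp:ℝ), t₀) ∈ Dom (-ψp) ψm)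
  -- === main derivative statement ===
  have hMain : ∀ t₀ ∈ Set.Ioi (0:ℝ),
      HasDerivAt (lyapTilde ψp ψm κ)
        ((angLen ψp ψm κ t₀)^2
          * Real.exp (-(2 / (ψp + ψm)) * ∫ θ in (-ψp)..ψm, Real.log (-(κ θ t₀)))
          * ((∫ θ in (-ψp)..ψm, (angDt (Set.Ioi 0) κ θ t₀)^2 / (κ θ t₀)^2)
            - (1 / (ψp + ψm))
              * (∫ θ in (-ψp)..ψm, angDt (Set.Ioi 0) κ θ t₀ / κ θ t₀)^2)) t₀ := by
    intro t₀ ht₀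
    have hLpos : 0 < angLen ψp ψm κ t₀ := by
      have h1 : angLen ψp ψm κ t₀ = ∫ θ in (-ψp)..ψm, -(1 / κ θ t₀) := by
        rw [angLen, ← intervalIntegral.integral_neg]
      rw [h1]
      apply intervalIntegral.intervalIntegral_pos_of_pos_on
      · exact ((continuousOn_const.div (sliceC f hfc t₀ ht₀)
          (fun θ hθ => hκ0 (θ, t₀) ⟨hθ, ht₀⟩)).neg).intervalIntegrable_of_Icc hab'
      · intro θ hθ
        have h2 := hneg θ ⟨hθ.1.le, hθ.2.le⟩ t₀ ht₀
        simp only [neg_pos]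
        exact div_neg_of_pos_of_neg one_pos h2
      · exact hab
    have hLne : angLen ψp ψm κ t₀ ≠ 0 := ne_of_gt hLpos
    -- FTC identities
    have hI1 : (∫ θ in (-ψp)..ψm, k11 (θ, t₀)) = k1 (ψm, t₀) - k1 (-ψp, t₀) :=
      myftc (g := fun θ => k1 (θ, t₀)) (g' := fun θ => k11 (θ, t₀)) hab'
        (fun θ hθ => hK1θ hab hf (q := (θ, t₀)) ⟨hθ, ht₀⟩) (sliceC k11 hck11 t₀ ht₀)
    have hI2 : (∫ θ in (-ψp)..ψm, (k11 (θ, t₀) * kt (θ, t₀) + k1 (θ, t₀) * k1t (θ, t₀)))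
        = k1 (ψm, t₀) * kt (ψm, t₀) - k1 (-ψp, t₀) * kt (-ψp, t₀) :=
      myftc (g := fun θ => k1 (θ, t₀) * kt (θ, t₀))
        (g' := fun θ => k11 (θ, t₀) * kt (θ, t₀) + k1 (θ, t₀) * k1t (θ, t₀)) hab'
        (fun θ hθ => (hK1θ hab hf (q := (θ, t₀)) ⟨hθ, ht₀⟩).mul (hKtθ hab hf (q := (θ, t₀)) ⟨hθ, ht₀⟩))
        (sliceC _ ((hck11.mul hckt).add (hck1.mul hck1t)) t₀ ht₀)
    have hI3 : (∫ θ in (-ψp)..ψm, (k1 (θ, t₀) * k1 (θ, t₀) + κ θ t₀ * k11 (θ, t₀)))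
        = κ ψm t₀ * k1 (ψm, t₀) - κ (-ψp) t₀ * k1 (-ψp, t₀) :=
      myftc (g := fun θ => κ θ t₀ * k1 (θ, t₀))
        (g' := fun θ => k1 (θ, t₀) * k1 (θ, t₀) + κ θ t₀ * k11 (θ, t₀)) hab'
        (fun θ hθ => (hK1slice hab hf (q := (θ, t₀)) ⟨hθ, ht₀⟩).mul (hK1θ hab hf (q := (θ, t₀)) ⟨hθ, ht₀⟩))
        (sliceC _ ((hck1.mul hck1).add (hfc.mul hck11)) t₀ ht₀)
    -- the identity for n = ∫ κ_t/κ²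
    have hn : (∫ θ in (-ψp)..ψm, kt (θ, t₀) / (κ θ t₀)^2)
        = (k1 (ψm, t₀) - k1 (-ψp, t₀)) + ((∫ θ in (-ψp)..ψm, κ θ t₀)
            + (ψm - (-ψp)) * ((ψp + ψm) / angLen ψp ψm κ t₀)) := by
      have h1 : (∫ θ in (-ψp)..ψm, kt (θ, t₀) / (κ θ t₀)^2)
          = ∫ θ in (-ψp)..ψm, (k11 (θ, t₀) + (κ θ t₀ + (ψp + ψm) / angLen ψp ψm κ t₀)) := by
        apply intCongr
        intro θ hθ
        have hne : κ θ t₀ ≠ 0 := ne_of_lt (hneg θ ⟨hθ.1.le, hθ.2.le⟩ t₀ ht₀)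
        rw [hPDE θ hθ t₀ ht₀]
        field_simp
        try ring
      rw [h1, intervalIntegral.integral_add (II k11 hck11 t₀ ht₀)
        ((II f hfc t₀ ht₀).add intervalIntegrable_const), hI1,
        intervalIntegral.integral_add (II f hfc t₀ ht₀) intervalIntegrable_const,
        intervalIntegral.integral_const, smul_eq_mul]
      try ring
    -- the identity for γ
    have hγeq : (∫ θ in (-ψp)..ψm, (-(k1 (θ, t₀) * k1t (θ, t₀)) + κ θ t₀ * kt (θ, t₀)))
        = -(k1 (ψm, t₀) * kt (ψm, t₀) - k1 (-ψp, t₀) * kt (-ψp, t₀))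
          + ((∫ θ in (-ψp)..ψm, kt (θ, t₀)^2 / (κ θ t₀)^2)
            - ((ψp + ψm) / angLen ψp ψm κ t₀) * (∫ θ in (-ψp)..ψm, kt (θ, t₀))) := by
      have h1 : (∫ θ in (-ψp)..ψm, (-(k1 (θ, t₀) * k1t (θ, t₀)) + κ θ t₀ * kt (θ, t₀)))
          = ∫ θ in (-ψp)..ψm,
            ((k11 (θ, t₀) * kt (θ, t₀) + κ θ t₀ * kt (θ, t₀))
              - (k11 (θ, t₀) * kt (θ, t₀) + k1 (θ, t₀) * k1t (θ, t₀))) :=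
        intervalIntegral.integral_congr (fun θ _ => by ring)
      have h2 : (∫ θ in (-ψp)..ψm, (k11 (θ, t₀) * kt (θ, t₀) + κ θ t₀ * kt (θ, t₀)))
          = ∫ θ in (-ψp)..ψm, (kt (θ, t₀)^2 / (κ θ t₀)^2
              - ((ψp + ψm) / angLen ψp ψm κ t₀) * kt (θ, t₀)) := by
        apply intCongr
        intro θ hθ
        have hne : κ θ t₀ ≠ 0 := ne_of_lt (hneg θ ⟨hθ.1.le, hθ.2.le⟩ t₀ ht₀)
        rw [hPDE θ hθ t₀ ht₀]
        field_simp
        try ring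
      rw [h1, intervalIntegral.integral_sub
        (II (fun q => k11 q * kt q + f q * kt q) ((hck11.mul hckt).add (hfc.mul hckt)) t₀ ht₀)
        (II (fun q => k11 q * kt q + k1 q * k1t q) ((hck11.mul hckt).add (hck1.mul hck1t)) t₀ ht₀),
        hI2, h2,
        intervalIntegral.integral_sub
          (II (fun q => kt q ^ 2 / (κ q.1 q.2) ^ 2)
            ((hckt.pow 2).div (hfc.pow 2) (fun q hq => pow_ne_zero 2 (hκ0 q hq))) t₀ ht₀)
          ((II kt hckt t₀ ht₀).const_mul _),
        intervalIntegral.integral_const_mul]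
      try ring
    -- the identity for m = ∫ κ_t/κ
    have hmeq : (∫ θ in (-ψp)..ψm, kt (θ, t₀) / κ θ t₀)
        = (κ ψm t₀ * k1 (ψm, t₀) - κ (-ψp) t₀ * k1 (-ψp, t₀))
          + (2 * (∫ θ in (-ψp)..ψm, (-(1/2)) * k1 (θ, t₀)^2 + (1/2) * (κ θ t₀)^2)
            + ((ψp + ψm) / angLen ψp ψm κ t₀) * (∫ θ in (-ψp)..ψm, κ θ t₀)) := by
      have h1 : (∫ θ in (-ψp)..ψm, kt (θ, t₀) / κ θ t₀)
          = ∫ θ in (-ψp)..ψm, ((k1 (θ, t₀) * k1 (θ, t₀) + κ θ t₀ * k11 (θ, t₀))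
              + (2 * ((-(1/2)) * k1 (θ, t₀)^2 + (1/2) * (κ θ t₀)^2)
                + ((ψp + ψm) / angLen ψp ψm κ t₀) * κ θ t₀)) := by
        apply intCongr
        intro θ hθ
        have hne : κ θ t₀ ≠ 0 := ne_of_lt (hneg θ ⟨hθ.1.le, hθ.2.le⟩ t₀ ht₀)
        rw [hPDE θ hθ t₀ ht₀]
        field_simp
        try ring
      rw [h1, intervalIntegral.integral_add
        (II (fun q => k1 q * k1 q + f q * k11 q) ((hck1.mul hck1).add (hfc.mul hck11)) t₀ ht₀)
        (((II (fun q => (-(1/2)) * k1 q^2 + (1/2) * f q^2) ((continuousOn_const.mul (hck1.pow 2)).add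
            (continuousOn_const.mul (hfc.pow 2))) t₀ ht₀).const_mul 2).add
          ((II f hfc t₀ ht₀).const_mul _)), hI3,
        intervalIntegral.integral_add
          ((II (fun q => (-(1/2)) * k1 q^2 + (1/2) * f q^2) ((continuousOn_const.mul (hck1.pow 2)).add
            (continuousOn_const.mul (hfc.pow 2))) t₀ ht₀).const_mul 2)
          ((II f hfc t₀ ht₀).const_mul _),
        intervalIntegral.integral_const_mul, intervalIntegral.integral_const_mul]
    -- value of lyapF1 on Ioi 0
    have hF1v : Set.EqOn (lyapF1 ψp ψm κ) (fun t =>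
        ((∫ θ in (-ψp)..ψm, (-(1/2)) * k1 (θ, t)^2 + (1/2) * (κ θ t)^2)
            + (∫ θ in (-ψp)..ψm, κ θ t) * ((ψp + ψm) / angLen ψp ψm κ t))
          + Real.cot ψm * ((1/2) * (κ ψm t)^2 + κ ψm t * ((ψp + ψm) / angLen ψp ψm κ t))
          + Real.cot ψp * ((1/2) * (κ (-ψp) t)^2 + κ (-ψp) t * ((ψp + ψm) / angLen ψp ψm κ t)))
        (Set.Ioi 0) := by
      intro t ht
      have e1 : (∫ θ in (-ψp)..ψm,
          (-(1/2)) * (angDθ ψp ψm κ θ t)^2 + (1/2) * (κ θ t)^2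
            + κ θ t * ((ψp + ψm) / angLen ψp ψm κ t))
          = ∫ θ in (-ψp)..ψm,
            (((-(1/2)) * k1 (θ, t)^2 + (1/2) * (κ θ t)^2)
              + κ θ t * ((ψp + ψm) / angLen ψp ψm κ t)) := by
        apply intervalIntegral.integral_congr
        intro θ hθ
        rw [Set.uIcc_of_le hab'] at hθ
        beta_reduce
        rw [show angDθ ψp ψm κ θ t = k1 (θ, t) from eq_angDθ hab hf (q := (θ, t)) ⟨hθ, ht⟩]
      simp only [lyapF1]
      rw [e1, intervalIntegral.integral_add
        (II (fun q => (-(1/2)) * k1 q^2 + (1/2) * (κ q.1 q.2)^2)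
          ((continuousOn_const.mul (hck1.pow 2)).add (continuousOn_const.mul (hfc.pow 2))) t ht)
        ((II f hfc t ht).mul_const _), intervalIntegral.integral_mul_const]
    -- derivative of the quotient (ψp+ψm)/L
    have hu : HasDerivAt (fun t => (ψp + ψm) / angLen ψp ψm κ t)
        ((0 * angLen ψp ψm κ t₀
            - (ψp + ψm) * (∫ θ in (-ψp)..ψm, kt (θ, t₀) / (κ θ t₀)^2))
          / (angLen ψp ψm κ t₀)^2) t₀ :=
      (hasDerivAt_const t₀ (ψp + ψm)).div (hL' t₀ ht₀) hLne
    -- derivative of lyapF1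
    have hF1' := (((hC' t₀ ht₀).add ((hD' t₀ ht₀).mul hu)).add
        (((((hp' t₀ ht₀).pow 2).const_mul ((1:ℝ)/2)).add
          ((hp' t₀ ht₀).mul hu)).const_mul (Real.cot ψm))).add
        (((((hq' t₀ ht₀).pow 2).const_mul ((1:ℝ)/2)).add
          ((hq' t₀ ht₀).mul hu)).const_mul (Real.cot ψp))
    have hF1d : HasDerivAt (lyapF1 ψp ψm κ) _ t₀ :=
      hF1'.congr_of_eventuallyEq (Filter.eventuallyEq_of_mem (Ioi_mem_nhds ht₀) hF1v)
    -- derivative of lyapF2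
    have h2L2 : (2:ℝ) * (angLen ψp ψm κ t₀)^2 ≠ 0 := by positivity
    have hF2' := ((hasDerivAt_const t₀ ((ψp + ψm)^2)).div
      (((hL' t₀ ht₀).pow 2).const_mul 2) h2L2).mul_const ((ψp + ψm) + Real.cot ψm + Real.cot ψp)
    have hF2d : HasDerivAt (lyapF2 ψp ψm κ) _ t₀ := hF2'
    -- derivative of the exponential factor and of L²
    have hExp' := ((hB' t₀ ht₀).const_mul (-(2 / (ψp + ψm)))).exp
    have hLsq := (hL' t₀ ht₀).pow 2
    have hT := (hLsq.mul hExp').mul (hF1d.add hF2d)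
    have hTd : HasDerivAt (lyapTilde ψp ψm κ) _ t₀ := hT
    -- convert to the claimed derivative
    have hWconv : (∫ θ in (-ψp)..ψm, (angDt (Set.Ioi 0) κ θ t₀)^2 / (κ θ t₀)^2)
        = ∫ θ in (-ψp)..ψm, kt (θ, t₀)^2 / (κ θ t₀)^2 := by
      apply intervalIntegral.integral_congr
      intro θ hθ
      rw [Set.uIcc_of_le hab'] at hθ
      beta_reduce
      rw [show angDt (Set.Ioi 0) κ θ t₀ = kt (θ, t₀) from eq_angDt hab hf (q := (θ, t₀)) ⟨hθ, ht₀⟩]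
    have hMconv : (∫ θ in (-ψp)..ψm, angDt (Set.Ioi 0) κ θ t₀ / κ θ t₀)
        = ∫ θ in (-ψp)..ψm, kt (θ, t₀) / κ θ t₀ := by
      apply intervalIntegral.integral_congr
      intro θ hθ
      rw [Set.uIcc_of_le hab'] at hθ
      beta_reduce
      rw [show angDt (Set.Ioi 0) κ θ t₀ = kt (θ, t₀) from eq_angDt hab hf (q := (θ, t₀)) ⟨hθ, ht₀⟩]
    convert hTd using 1
    simp only [Pi.add_apply, Pi.mul_apply, Pi.pow_apply]
    rw [hWconv, hMconv, hF1v ht₀]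
    simp only [lyapF2]
    rw [hγeq, hn, hmeq, hbcb t₀ ht₀, hbca t₀ ht₀]
    push_cast
    field_simp
    ring
  refine ⟨hMain, ?_⟩
  -- nonnegativity of the derivative (Cauchy–Schwarz)
  have hnn : ∀ t ∈ Set.Ioi (0:ℝ), 0 ≤
      (angLen ψp ψm κ t)^2
        * Real.exp (-(2 / (ψp + ψm)) * ∫ θ in (-ψp)..ψm, Real.log (-(κ θ t)))
        * ((∫ θ in (-ψp)..ψm, (angDt (Set.Ioi 0) κ θ t)^2 / (κ θ t)^2)
          - (1 / (ψp + ψm)) * (∫ θ in (-ψp)..ψm, angDt (Set.Ioi 0) κ θ t / κ θ t)^2) := by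
    intro t ht
    have hWc : (∫ θ in (-ψp)..ψm, (angDt (Set.Ioi 0) κ θ t)^2 / (κ θ t)^2)
        = ∫ θ in (-ψp)..ψm, (kt (θ, t) / κ θ t)^2 := by
      apply intervalIntegral.integral_congr
      intro θ hθ
      rw [Set.uIcc_of_le hab'] at hθ
      beta_reduce
      rw [show angDt (Set.Ioi 0) κ θ t = kt (θ, t) from eq_angDt hab hf (q := (θ, t)) ⟨hθ, ht⟩,
        div_pow]
    have hMc : (∫ θ in (-ψp)..ψm, angDt (Set.Ioi 0) κ θ t / κ θ t)
        = ∫ θ in (-ψp)..ψm, kt (θ, t) / κ θ t := by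
      apply intervalIntegral.integral_congr
      intro θ hθ
      rw [Set.uIcc_of_le hab'] at hθ
      beta_reduce
      rw [show angDt (Set.Ioi 0) κ θ t = kt (θ, t) from eq_angDt hab hf (q := (θ, t)) ⟨hθ, ht⟩]
    rw [hWc, hMc]
    have hgint : IntervalIntegrable (fun θ => kt (θ, t) / κ θ t) MeasureTheory.volume (-ψp) ψm :=
      II (fun q => kt q / (κ q.1 q.2)) (hckt.div hfc hκ0) t ht
    have hg2int : IntervalIntegrable (fun θ => (kt (θ, t) / κ θ t)^2)
        MeasureTheory.volume (-ψp) ψm :=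
      II (fun q => (kt q / (κ q.1 q.2))^2) ((hckt.div hfc hκ0).pow 2) t ht
    set M := ∫ θ in (-ψp)..ψm, kt (θ, t) / κ θ t with hM
    set c : ℝ := M / (ψp + ψm) with hc
    have key : (0:ℝ) ≤ ∫ θ in (-ψp)..ψm, (kt (θ, t) / κ θ t - c)^2 :=
      intervalIntegral.integral_nonneg hab' (fun θ _ => sq_nonneg _)
    have expand : (∫ θ in (-ψp)..ψm, (kt (θ, t) / κ θ t - c)^2)
        = (∫ θ in (-ψp)..ψm, (kt (θ, t) / κ θ t)^2) - 2 * c * M + (ψm - (-ψp)) * c^2 := by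
      have e1 : (∫ θ in (-ψp)..ψm, (kt (θ, t) / κ θ t - c)^2)
          = ∫ θ in (-ψp)..ψm,
            ((kt (θ, t) / κ θ t)^2 - (2 * c) * (kt (θ, t) / κ θ t) + c^2) :=
        intervalIntegral.integral_congr (fun θ _ => by ring)
      rw [e1, intervalIntegral.integral_add (hg2int.sub (hgint.const_mul _))
        intervalIntegrable_const,
        intervalIntegral.integral_sub hg2int (hgint.const_mul _),
        intervalIntegral.integral_const_mul, intervalIntegral.integral_const, smul_eq_mul]
      try ring
    have e2 : -(2 * c * M) + (ψm - (-ψp)) * c^2 = -((1 / (ψp + ψm)) * M^2) := by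
      rw [hc]
      field_simp
      ring
    have : (0:ℝ) ≤ (∫ θ in (-ψp)..ψm, (kt (θ, t) / κ θ t)^2) - (1 / (ψp + ψm)) * M^2 := by
      rw [expand] at key
      linarith
    have hE : (0:ℝ) < Real.exp (-(2 / (ψp + ψm)) * ∫ θ in (-ψp)..ψm, Real.log (-(κ θ t))) :=
      Real.exp_pos _
    positivity
  -- monotonicity
  have hmono : MonotoneOn (lyapTilde ψp ψm κ) (Set.Ioi 0) := by
    apply monotoneOn_of_deriv_nonneg (convex_Ioi 0)
    · exact fun t ht => (hMain t ht).continuousAt.continuousWithinAt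
    · intro t ht
      rw [interior_Ioi] at ht
      exact (hMain t ht).differentiableAt.differentiableWithinAt
    · intro t ht
      rw [interior_Ioi] at ht
      rw [(hMain t ht).deriv]
      exact hnn t ht
  exact fun t₁ h₁ t₂ h₂ h => hmono h₁ h₂ h
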